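/- arXiv:1411.4342 — 3 statements merged into one kernel-verified Lean document; each statement's English description precedes it below -/
import Mathlib

section
/- For the Tsallis divergence T(f,g) = 1/(1−α) + (1/(α−1)) ∫ f^α g^{1−α} with densities bounded in [B', B], the influence functions satisfy the regularity condition: E_f[(ψ_f(X; f', g') − ψ_f(X; f, g))²] = O(‖f−f'‖₂² + ‖g−g'‖₂²) as ‖f−f'‖₂, ‖g−g'‖₂ → 0, uniformly over densities f, f', g, g' bounded in [B', B]. -/
/-!
With `c = α / (α - 1)`, `φ = f ^ (α - 1) * g ^ (1 - α)` and `ρ = f ^ α * g ^ (1 - α)`, the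
difference of the two influence functions is `c * ((φ' - φ) - ∫ (ρ' - ρ))`. Both maps
`(a, b) ↦ a ^ p * b ^ q` are `C¹` on the compact convex square `[B', B]²`, hence Lipschitz there,
so `(φ' - φ)²` and `(ρ' - ρ)²` are pointwise `O((f - f')² + (g - g')²)`. Cauchy–Schwarz bounds
`(∫ (ρ' - ρ))²` by `μ(X) ∫ (ρ' - ρ)²`, and the weight `f` is at most `B`.
-/

open MeasureTheory Set
open scoped NNReal

lemma LipschitzOnWith.sq_sub_le {F : ℝ × ℝ → ℝ} {K : ℝ≥0} {s : Set (ℝ × ℝ)}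
    (hF : LipschitzOnWith K F s) {p q : ℝ × ℝ} (hp : p ∈ s) (hq : q ∈ s) :
    (F p - F q) ^ 2 ≤ K ^ 2 * ((p.1 - q.1) ^ 2 + (p.2 - q.2) ^ 2) := by
  have h := hF.dist_le_mul p hp q hq
  rw [Real.dist_eq, Prod.dist_eq, Real.dist_eq, Real.dist_eq] at h
  have hmax : max |p.1 - q.1| |p.2 - q.2| ^ 2 ≤ (p.1 - q.1) ^ 2 + (p.2 - q.2) ^ 2 := by
    rcases max_choice |p.1 - q.1| |p.2 - q.2| with hm | hm <;>
      rw [hm, sq_abs] <;> nlinarith [sq_nonneg (p.1 - q.1), sq_nonneg (p.2 - q.2)]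
  calc (F p - F q) ^ 2 = |F p - F q| ^ 2 := (sq_abs _).symm
    _ ≤ (K * max |p.1 - q.1| |p.2 - q.2|) ^ 2 := by gcongr
    _ ≤ K ^ 2 * ((p.1 - q.1) ^ 2 + (p.2 - q.2) ^ 2) := by rw [mul_pow]; gcongr

lemma exists_lipschitzOnWith_rpow_mul_rpow {B' : ℝ} (hB' : 0 < B') (B p q : ℝ) :
    ∃ K, LipschitzOnWith K (fun z : ℝ × ℝ => z.1 ^ p * z.2 ^ q) (Icc B' B ×ˢ Icc B' B) := by
  refine ContDiffOn.exists_lipschitzOnWith (n := 1) ?_ one_ne_zero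
    ((convex_Icc B' B).prod (convex_Icc B' B)) (isCompact_Icc.prod isCompact_Icc)
  intro z hz
  have h1 : z.1 ≠ 0 := (hB'.trans_le hz.1.1).ne'
  have h2 : z.2 ≠ 0 := (hB'.trans_le hz.2.1).ne'
  exact (((Real.contDiffAt_rpow_const_of_ne h1).comp z contDiffAt_fst).mul
    ((Real.contDiffAt_rpow_const_of_ne h2).comp z contDiffAt_snd)).contDiffWithinAt

section

variable {X : Type*} [MeasurableSpace X] {μ : Measure X} [IsFiniteMeasure μ]

lemma integrable_comp_of_continuousOn_of_isCompact {Y E : Type*} [TopologicalSpace Y]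
    [NormedAddCommGroup E] {F : Y → E} {s : Set Y} (hs : IsCompact s) (hF : ContinuousOn F s)
    {φ : X → Y} (hφ : ∀ x, φ x ∈ s) (hm : AEStronglyMeasurable (fun x => F (φ x)) μ) :
    Integrable (fun x => F (φ x)) μ :=
  let ⟨C, hC⟩ := hs.exists_bound_of_continuousOn hF
  .of_bound hm C (ae_of_all _ fun x => hC _ (hφ x))

lemma integrable_sq_sub_of_mem_Icc {a b : X → ℝ} {B' B : ℝ} (ha : Measurable a)
    (hb : Measurable b) (haB : ∀ x, a x ∈ Icc B' B) (hbB : ∀ x, b x ∈ Icc B' B) :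
    Integrable (fun x => (a x - b x) ^ 2) μ :=
  integrable_comp_of_continuousOn_of_isCompact (F := fun z : ℝ × ℝ => (z.1 - z.2) ^ 2)
    (φ := fun x => (a x, b x)) (isCompact_Icc.prod isCompact_Icc) (by fun_prop)
    (fun x => ⟨haB x, hbB x⟩) (by fun_prop)

lemma integrable_rpow_mul_rpow_of_mem_Icc {a b : X → ℝ} {B' B : ℝ} (hB' : 0 < B') (p q : ℝ)
    (ha : Measurable a) (hb : Measurable b) (haB : ∀ x, a x ∈ Icc B' B)
    (hbB : ∀ x, b x ∈ Icc B' B) : Integrable (fun x => a x ^ p * b x ^ q) μ :=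
  let ⟨_, hK⟩ := exists_lipschitzOnWith_rpow_mul_rpow hB' B p q
  integrable_comp_of_continuousOn_of_isCompact (φ := fun x => (a x, b x))
    (isCompact_Icc.prod isCompact_Icc) hK.continuousOn (fun x => ⟨haB x, hbB x⟩) (by fun_prop)

lemma sq_integral_le_measureReal_univ_mul_integral_sq {v : X → ℝ} (hv : MemLp v 2 μ) :
    (∫ x, v x ∂μ) ^ 2 ≤ μ.real univ * ∫ x, v x ^ 2 ∂μ := by
  rcases eq_zero_or_neZero μ with rfl | _
  · simp
  have hV : 0 < μ.real univ := measureReal_univ_pos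
  have h := (even_two.convexOn_pow (𝕜 := ℝ)).map_average_le (continuous_pow 2).continuousOn
    isClosed_univ (ae_of_all _ fun _ => mem_univ _) (hv.integrable one_le_two) hv.integrable_sq
  simp only [average_eq, smul_eq_mul, mul_pow, inv_pow] at h
  field_simp at h
  exact h

lemma integral_sq_sub_integral_mul_le {u v w e : X → ℝ} {K₁ K₂ B : ℝ} (hB : 0 ≤ B)
    (hw : ∀ x, w x ∈ Icc 0 B) (he : Integrable e μ) (hv : AEStronglyMeasurable v μ)
    (hue : ∀ x, u x ^ 2 ≤ K₁ * e x) (hve : ∀ x, v x ^ 2 ≤ K₂ * e x) :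
    ∫ x, (u x - ∫ y, v y ∂μ) ^ 2 * w x ∂μ
      ≤ 2 * B * (K₁ + μ.real univ ^ 2 * K₂) * ∫ x, e x ∂μ := by
  set m := ∫ y, v y ∂μ
  have hv2 : Integrable (fun x => v x ^ 2) μ :=
    (he.const_mul K₂).mono' (hv.pow 2) (ae_of_all _ fun x => by
      simpa only [Real.norm_eq_abs, abs_pow, sq_abs] using hve x)
  have hm : m ^ 2 ≤ μ.real univ * (K₂ * ∫ x, e x ∂μ) := by
    rw [← integral_const_mul]
    refine (sq_integral_le_measureReal_univ_mul_integral_sq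
      ((memLp_two_iff_integrable_sq hv).2 hv2)).trans ?_
    gcongr
    exacts [he.const_mul K₂, hve]
  have hpt : ∀ x, (u x - m) ^ 2 * w x ≤ 2 * B * (K₁ * e x + m ^ 2) := fun x => by
    have h2 : (u x - m) ^ 2 ≤ 2 * (K₁ * e x + m ^ 2) := by
      nlinarith [hue x, sq_nonneg (u x + m)]
    nlinarith [(hw x).1, (hw x).2, sq_nonneg (u x - m)]
  calc ∫ x, (u x - m) ^ 2 * w x ∂μ ≤ ∫ x, 2 * B * (K₁ * e x + m ^ 2) ∂μ :=
        integral_mono_of_nonneg (ae_of_all _ fun x => mul_nonneg (sq_nonneg _) (hw x).1)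
          (((he.const_mul K₁).add (integrable_const _)).const_mul _) (ae_of_all _ hpt)
    _ = 2 * B * (K₁ * ∫ x, e x ∂μ + μ.real univ * m ^ 2) := by
        rw [integral_const_mul, integral_add (he.const_mul K₁) (integrable_const _),
          integral_const_mul, integral_const, smul_eq_mul]
    _ ≤ 2 * B * (K₁ * ∫ x, e x ∂μ + μ.real univ * (μ.real univ * (K₂ * ∫ x, e x ∂μ))) := by
        gcongr
    _ = 2 * B * (K₁ + μ.real univ ^ 2 * K₂) * ∫ x, e x ∂μ := by ring

end

theorem tsallis_influence_regularity_general
    {X : Type*} [MeasurableSpace X] (μ : Measure X) [IsFiniteMeasure μ]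
    (α B B' : ℝ) (hB' : 0 < B') (hBB : B' ≤ B) :
    ∃ C : ℝ, 0 < C ∧
      ∀ f f' g g' : X → ℝ,
        Measurable f → Measurable f' → Measurable g → Measurable g' →
        (∀ x, B' ≤ f x ∧ f x ≤ B) → (∀ x, B' ≤ f' x ∧ f' x ≤ B) →
        (∀ x, B' ≤ g x ∧ g x ≤ B) → (∀ x, B' ≤ g' x ∧ g' x ≤ B) →
        (∫ x, f x ∂μ = 1) → (∫ x, f' x ∂μ = 1) →
        (∫ x, g x ∂μ = 1) → (∫ x, g' x ∂μ = 1) →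
        ∫ x,
          ((α / (α - 1)) * (f' x ^ (α - 1) * g' x ^ (1 - α)
              - ∫ y, f' y ^ α * g' y ^ (1 - α) ∂μ)
            - (α / (α - 1)) * (f x ^ (α - 1) * g x ^ (1 - α)
              - ∫ y, f y ^ α * g y ^ (1 - α) ∂μ))^2 * f x ∂μ
        ≤ C * ((∫ x, (f x - f' x)^2 ∂μ) + (∫ x, (g x - g' x)^2 ∂μ)) := by
  have hB : 0 ≤ B := hB'.le.trans hBB
  obtain ⟨K₁, hK₁⟩ := exists_lipschitzOnWith_rpow_mul_rpow hB' B (α - 1) (1 - α)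
  obtain ⟨K₂, hK₂⟩ := exists_lipschitzOnWith_rpow_mul_rpow hB' B α (1 - α)
  refine ⟨max ((α / (α - 1)) ^ 2 * (2 * B * (K₁ ^ 2 + μ.real univ ^ 2 * K₂ ^ 2))) 1,
    lt_max_of_lt_right one_pos, ?_⟩
  intro f f' g g' hf hf' hg hg' hfB hf'B hgB hg'B _ _ _ _
  have hfg (x : X) : (f x, g x) ∈ Icc B' B ×ˢ Icc B' B := ⟨hfB x, hgB x⟩
  have hfg' (x : X) : (f' x, g' x) ∈ Icc B' B ×ˢ Icc B' B := ⟨hf'B x, hg'B x⟩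
  have hff' := integrable_sq_sub_of_mem_Icc (μ := μ) hf hf' hfB hf'B
  have hgg' := integrable_sq_sub_of_mem_Icc (μ := μ) hg hg' hgB hg'B
  calc _ = (α / (α - 1)) ^ 2 * ∫ x, ((f' x ^ (α - 1) * g' x ^ (1 - α)
            - f x ^ (α - 1) * g x ^ (1 - α))
          - ∫ y, (f' y ^ α * g' y ^ (1 - α) - f y ^ α * g y ^ (1 - α)) ∂μ) ^ 2 * f x ∂μ := by
        rw [integral_sub (integrable_rpow_mul_rpow_of_mem_Icc hB' _ _ hf' hg' hf'B hg'B)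
          (integrable_rpow_mul_rpow_of_mem_Icc hB' _ _ hf hg hfB hgB), ← integral_const_mul]
        congr 1 with x
        ring
    _ ≤ (α / (α - 1)) ^ 2 * (2 * B * (K₁ ^ 2 + μ.real univ ^ 2 * K₂ ^ 2) *
          ∫ x, ((f x - f' x) ^ 2 + (g x - g' x) ^ 2) ∂μ) := by
        gcongr
        refine integral_sq_sub_integral_mul_le hB (fun x => ⟨hB'.le.trans (hfB x).1, (hfB x).2⟩)
          (hff'.add hgg') (by fun_prop) (fun x => ?_) (fun x => ?_)
        · rw [sub_sq_comm (f x), sub_sq_comm (g x)]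
          exact hK₁.sq_sub_le (hfg' x) (hfg x)
        · rw [sub_sq_comm (f x), sub_sq_comm (g x)]
          exact hK₂.sq_sub_le (hfg' x) (hfg x)
    _ ≤ _ := by
        rw [integral_add hff' hgg', ← mul_assoc]
        gcongr
        exact le_max_left _ _

/-- Regularity of the Tsallis-divergence influence function
`ψ_f(x; f,g) = (α/(α−1))(f(x)^{α−1} g(x)^{1−α} − ∫ f^α g^{1−α})`:
uniformly over densities bounded in `[B', B]`,
`E_f[(ψ_f(X; f',g') − ψ_f(X; f,g))²] ≤ C (‖f−f'‖₂² + ‖g−g'‖₂²)`. -/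
theorem tsallis_influence_regularity
    {X : Type*} [MeasurableSpace X] (μ : Measure X) [IsFiniteMeasure μ]
    (α B B' : ℝ) (hα0 : α ≠ 0) (hα1 : α ≠ 1) (hB' : 0 < B') (hBB : B' ≤ B) :
    ∃ C : ℝ, 0 < C ∧
      ∀ f f' g g' : X → ℝ,
        Measurable f → Measurable f' → Measurable g → Measurable g' →
        (∀ x, B' ≤ f x ∧ f x ≤ B) → (∀ x, B' ≤ f' x ∧ f' x ≤ B) →
        (∀ x, B' ≤ g x ∧ g x ≤ B) → (∀ x, B' ≤ g' x ∧ g' x ≤ B) →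
        (∫ x, f x ∂μ = 1) → (∫ x, f' x ∂μ = 1) →
        (∫ x, g x ∂μ = 1) → (∫ x, g' x ∂μ = 1) →
        ∫ x,
          ((α / (α - 1)) * (f' x ^ (α - 1) * g' x ^ (1 - α)
              - ∫ y, f' y ^ α * g' y ^ (1 - α) ∂μ)
            - (α / (α - 1)) * (f x ^ (α - 1) * g x ^ (1 - α)
              - ∫ y, f y ^ α * g y ^ (1 - α) ∂μ))^2 * f x ∂μ
        ≤ C * ((∫ x, (f x - f' x)^2 ∂μ) + (∫ x, (g x - g' x)^2 ∂μ)) :=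
  tsallis_influence_regularity_general μ α B B' hB' hBB
end

section
/- The second-order remainder of the Taylor expansion of the Tsallis divergence T(f,g) = 1/(1−α) + (1/(α−1)) ∫ f^α g^{1−α} around (f₀, g₀) is O(‖f−f₀‖₂² + ‖g−g₀‖₂²), that is, |T(f,g) − T(f₀,g₀) − (α/(α−1)) ∫ f₀^{α−1} g₀^{1−α}(f−f₀) − ((1−α)/(α−1)) ∫ f₀^{α} g₀^{−α}(g−g₀)| ≤ C(‖f−f₀‖₂² + ‖g−g₀‖₂²) for a constant C depending only on α, B, B'. -/
open MeasureTheory Set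

section aux
variable {B B' : ℝ}

lemma rpow_le_max (hB' : 0 < B') (q : ℝ) {t : ℝ}
    (ht : t ∈ Icc B' B) : t ^ q ≤ max (B' ^ q) (B ^ q) := by
  rcases le_or_gt 0 q with hq | hq
  · exact le_max_of_le_right (Real.rpow_le_rpow (hB'.le.trans ht.1) ht.2 hq)
  · exact le_max_of_le_left (Real.rpow_le_rpow_of_nonpos hB' ht.1 hq.le)

lemma rpow_lip (hB' : 0 < B') (q : ℝ) {s t : ℝ}
    (hs : s ∈ Icc B' B) (ht : t ∈ Icc B' B) :
    |t ^ q - s ^ q| ≤ (|q| * max (B' ^ (q-1)) (B ^ (q-1))) * |t - s| := by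
  have hIcc : (Icc B' B : Set ℝ) ⊆ {x | x ≠ 0} := fun x hx => (hB'.trans_le hx.1).ne'
  have hderiv : ∀ x ∈ Icc B' B, HasDerivWithinAt (fun y : ℝ => y ^ q)
      (q * x ^ (q - 1)) (Icc B' B) x := fun x hx =>
    (Real.hasDerivAt_rpow_const (Or.inl (hIcc hx))).hasDerivWithinAt
  have hb : ∀ x ∈ Icc B' B, ‖q * x ^ (q - 1)‖ ≤ |q| * max (B' ^ (q-1)) (B ^ (q-1)) := by
    intro x hx
    rw [Real.norm_eq_abs, abs_mul]
    refine mul_le_mul_of_nonneg_left ?_ (abs_nonneg q)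
    rw [abs_of_pos (Real.rpow_pos_of_pos (hB'.trans_le hx.1) _)]
    exact rpow_le_max hB' _ hx
  have := (convex_Icc B' B).norm_image_sub_le_of_norm_hasDerivWithin_le hderiv hb hs ht
  simpa [Real.norm_eq_abs] using this

lemma rpow_taylor (hB' : 0 < B') (q : ℝ) {s t : ℝ}
    (hs : s ∈ Icc B' B) (ht : t ∈ Icc B' B) :
    |t ^ q - s ^ q - q * s ^ (q-1) * (t - s)|
      ≤ (|q| * (|q-1| * max (B' ^ (q-2)) (B ^ (q-2)))) * (t - s)^2 := by
  set L : ℝ := |q-1| * max (B' ^ (q-2)) (B ^ (q-2)) with hL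
  have hLnn : 0 ≤ L := by positivity
  set S : Set ℝ := Icc (min s t) (max s t) with hS
  have hsub : S ⊆ Icc B' B := by
    intro x hx
    constructor
    · exact le_trans (le_min hs.1 ht.1) hx.1
    · exact le_trans hx.2 (max_le hs.2 ht.2)
  have hderiv : ∀ x ∈ S, HasDerivWithinAt (fun y : ℝ => y ^ q - q * s ^ (q-1) * y)
      (q * x ^ (q - 1) - q * s ^ (q-1)) S x := by
    intro x hx
    have h1 : HasDerivAt (fun y : ℝ => y ^ q) (q * x ^ (q-1)) x :=
      Real.hasDerivAt_rpow_const (Or.inl (hB'.trans_le (hsub hx).1).ne')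
    exact ((h1.sub ((hasDerivAt_id x).const_mul (q * s ^ (q-1)))).congr_deriv
      (by ring)).hasDerivWithinAt
  have hb : ∀ x ∈ S, ‖q * x ^ (q - 1) - q * s ^ (q-1)‖ ≤ |q| * L * |t - s| := by
    intro x hx
    rw [Real.norm_eq_abs]
    have h1 : |q * x ^ (q-1) - q * s ^ (q-1)| = |q| * |x ^ (q-1) - s ^ (q-1)| := by
      rw [← abs_mul]; ring_nf
    rw [h1, mul_assoc]
    refine mul_le_mul_of_nonneg_left ?_ (abs_nonneg q)
    have hlip := rpow_lip hB' (q-1) hs (hsub hx)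
    have h2 : (q-1) - 1 = q - 2 := by ring
    rw [h2] at hlip
    refine hlip.trans (mul_le_mul_of_nonneg_left ?_ hLnn)
    -- |x - s| ≤ |t - s| since x ∈ [min s t, max s t]
    rw [abs_le]
    constructor
    · have := hx.1
      have h3 : min s t ≥ s - |t - s| := by
        rcases abs_cases (t - s) with ⟨h, _⟩ | ⟨h, _⟩ <;> simp [min_le_iff, le_min_iff] <;> linarith
      linarith
    · have := hx.2
      have h3 : max s t ≤ s + |t - s| := by
        rcases abs_cases (t - s) with ⟨h, _⟩ | ⟨h, _⟩ <;> simp [max_le_iff] <;> linarith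
      linarith
  have hsS : s ∈ S := ⟨min_le_left s t, le_max_left s t⟩
  have htS : t ∈ S := ⟨min_le_right s t, le_max_right s t⟩
  have := (convex_Icc _ _).norm_image_sub_le_of_norm_hasDerivWithin_le hderiv hb hsS htS
  rw [Real.norm_eq_abs, Real.norm_eq_abs] at this
  calc |t ^ q - s ^ q - q * s ^ (q-1) * (t - s)|
      = |(t ^ q - q * s ^ (q-1) * t) - (s ^ q - q * s ^ (q-1) * s)| := by ring_nf
    _ ≤ |q| * L * |t - s| * |t - s| := this
    _ = |q| * L * (t - s)^2 := by rw [mul_assoc, ← abs_mul, ← sq, abs_sq]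
    _ = (|q| * L) * (t - s)^2 := by ring

noncomputable def Mc (B B' q : ℝ) : ℝ := max (B' ^ q) (B ^ q)
noncomputable def Ktc (B B' q : ℝ) : ℝ := |q| * (|q-1| * Mc B B' (q-2))
noncomputable def Lc (B B' q : ℝ) : ℝ := |q| * Mc B B' (q-1)
noncomputable def Kf (B B' α : ℝ) : ℝ :=
  Mc B B' (1-α) * Ktc B B' α + Mc B B' α * Ktc B B' (1-α)
    + |α| * Mc B B' (α-1) * Lc B B' (1-α)

lemma Mc_pos (hB' : 0 < B') (hBB : B' ≤ B) (q : ℝ) : 0 < Mc B B' q :=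
  lt_max_iff.2 (Or.inl (Real.rpow_pos_of_pos hB' q))

set_option maxHeartbeats 1000000 in
lemma pointwise_bound (hB' : 0 < B') (hBB : B' ≤ B) (α : ℝ) {u v u₀ v₀ : ℝ}
    (hu : u ∈ Icc B' B) (hv : v ∈ Icc B' B) (hu₀ : u₀ ∈ Icc B' B) (hv₀ : v₀ ∈ Icc B' B) :
    |u ^ α * v ^ (1-α) - u₀ ^ α * v₀ ^ (1-α)
      - α * (u₀ ^ (α-1) * v₀ ^ (1-α) * (u - u₀))
      - (1-α) * (u₀ ^ α * v₀ ^ (-α) * (v - v₀))|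
    ≤ Kf B B' α * ((u - u₀)^2 + (v - v₀)^2) := by
  have hexp : v₀ ^ (-α) = v₀ ^ ((1-α)-1) := by ring_nf
  have h1 := rpow_taylor hB' α hu₀ hu
  have h2 := rpow_taylor hB' (1-α) hv₀ hv
  have h3 := rpow_lip hB' (1-α) hv₀ hv
  set Ta := u ^ α - u₀ ^ α - α * u₀ ^ (α-1) * (u - u₀) with hTa
  set Tb := v ^ (1-α) - v₀ ^ (1-α) - (1-α) * v₀ ^ ((1-α)-1) * (v - v₀) with hTb
  have key : u ^ α * v ^ (1-α) - u₀ ^ α * v₀ ^ (1-α)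
      - α * (u₀ ^ (α-1) * v₀ ^ (1-α) * (u - u₀))
      - (1-α) * (u₀ ^ α * v₀ ^ (-α) * (v - v₀))
      = v ^ (1-α) * Ta + α * u₀ ^ (α-1) * ((u - u₀) * (v ^ (1-α) - v₀ ^ (1-α)))
        + u₀ ^ α * Tb := by
    rw [hexp, hTa, hTb]; ring
  have hMβ : v ^ (1-α) ≤ Mc B B' (1-α) := rpow_le_max hB' _ hv
  have hMα : u₀ ^ α ≤ Mc B B' α := rpow_le_max hB' _ hu₀
  have hMa1 : u₀ ^ (α-1) ≤ Mc B B' (α-1) := rpow_le_max hB' _ hu₀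
  have pvβ : 0 < v ^ (1-α) := Real.rpow_pos_of_pos (hB'.trans_le hv.1) _
  have puα : 0 < u₀ ^ α := Real.rpow_pos_of_pos (hB'.trans_le hu₀.1) _
  have pua1 : 0 < u₀ ^ (α-1) := Real.rpow_pos_of_pos (hB'.trans_le hu₀.1) _
  rw [key]
  have t1 : |v ^ (1-α) * Ta| ≤ Mc B B' (1-α) * (Ktc B B' α * (u - u₀)^2) := by
    rw [abs_mul, abs_of_pos pvβ]
    exact mul_le_mul hMβ (by simpa [Ktc, Mc, hTa] using h1) (abs_nonneg _)
      (Mc_pos hB' hBB _).le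
  have t3 : |u₀ ^ α * Tb| ≤ Mc B B' α * (Ktc B B' (1-α) * (v - v₀)^2) := by
    rw [abs_mul, abs_of_pos puα]
    exact mul_le_mul hMα (by simpa [Ktc, Mc, hTb] using h2) (abs_nonneg _)
      (Mc_pos hB' hBB _).le
  set K1 := Mc B B' (1-α) * Ktc B B' α with hK1d
  set K2 := Mc B B' α * Ktc B B' (1-α) with hK2d
  set K3 := |α| * Mc B B' (α-1) * Lc B B' (1-α) with hK3d
  have hK1 : 0 ≤ K1 := by rw [hK1d]; unfold Ktc Mc; positivity
  have hK2 : 0 ≤ K2 := by rw [hK2d]; unfold Ktc Mc; positivity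
  have hK3 : 0 ≤ K3 := by rw [hK3d]; unfold Lc Mc; positivity
  have hprod : |u - u₀| * |v - v₀| ≤ ((u - u₀)^2 + (v - v₀)^2) / 2 := by
    nlinarith [sq_nonneg (|u - u₀| - |v - v₀|), sq_abs (u - u₀), sq_abs (v - v₀)]
  have h3' : |v ^ (1-α) - v₀ ^ (1-α)| ≤ Lc B B' (1-α) * |v - v₀| := by
    unfold Lc Mc; exact h3
  have t2 : |α * u₀ ^ (α-1) * ((u - u₀) * (v ^ (1-α) - v₀ ^ (1-α)))|
      ≤ K3 * ((u - u₀)^2 + (v - v₀)^2) := by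
    have hLnn : 0 ≤ Lc B B' (1-α) := by unfold Lc Mc; positivity
    have hMnn : 0 ≤ Mc B B' (α-1) := by unfold Mc; positivity
    calc |α * u₀ ^ (α-1) * ((u - u₀) * (v ^ (1-α) - v₀ ^ (1-α)))|
        = |α| * u₀ ^ (α-1) * (|u - u₀| * |v ^ (1-α) - v₀ ^ (1-α)|) := by
          rw [abs_mul, abs_mul, abs_mul, abs_of_pos pua1]
      _ ≤ |α| * Mc B B' (α-1) * (|u - u₀| * (Lc B B' (1-α) * |v - v₀|)) := by
          refine mul_le_mul (mul_le_mul_of_nonneg_left hMa1 (abs_nonneg α))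
            (mul_le_mul_of_nonneg_left h3' (abs_nonneg _)) (by positivity) (by positivity)
      _ = K3 * (|u - u₀| * |v - v₀|) := by rw [hK3d]; ring
      _ ≤ K3 * (((u - u₀)^2 + (v - v₀)^2) / 2) :=
          mul_le_mul_of_nonneg_left hprod hK3
      _ ≤ K3 * ((u - u₀)^2 + (v - v₀)^2) := by
          have h5 : ((u - u₀)^2 + (v - v₀)^2) / 2 ≤ (u - u₀)^2 + (v - v₀)^2 := by
            linarith [sq_nonneg (u - u₀), sq_nonneg (v - v₀)]
          exact mul_le_mul_of_nonneg_left h5 hK3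
  have habs : |v ^ (1-α) * Ta + α * u₀ ^ (α-1) * ((u - u₀) * (v ^ (1-α) - v₀ ^ (1-α)))
        + u₀ ^ α * Tb|
      ≤ |v ^ (1-α) * Ta| + |α * u₀ ^ (α-1) * ((u - u₀) * (v ^ (1-α) - v₀ ^ (1-α)))|
        + |u₀ ^ α * Tb| := abs_add_three _ _ _
  refine le_trans habs ?_
  have hfin := add_le_add (add_le_add t1 t2) t3
  have hKf : Kf B B' α = K1 + K2 + K3 := by rw [hK1d, hK2d, hK3d, Kf]
  rw [hKf]
  have e1 : Mc B B' (1-α) * (Ktc B B' α * (u - u₀)^2) = K1 * (u - u₀)^2 := by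
    rw [hK1d]; ring
  have e2 : Mc B B' α * (Ktc B B' (1-α) * (v - v₀)^2) = K2 * (v - v₀)^2 := by
    rw [hK2d]; ring
  rw [e1, e2] at hfin
  linarith [hfin, mul_nonneg hK1 (sq_nonneg (v - v₀)), mul_nonneg hK2 (sq_nonneg (u - u₀))]
lemma meas_rpow {X : Type*} [MeasurableSpace X] {h : X → ℝ} (hm : Measurable h)
    (q : ℝ) : Measurable fun x => h x ^ q := by fun_prop

lemma integrable_of_abs_bound {X : Type*} [MeasurableSpace X] {μ : Measure X}
    [IsFiniteMeasure μ] {h : X → ℝ} (hm : Measurable h) {M : ℝ}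
    (hb : ∀ x, |h x| ≤ M) : Integrable h μ := by
  refine Integrable.mono' (integrable_const M) hm.aestronglyMeasurable ?_
  filter_upwards with x
  simpa [Real.norm_eq_abs] using hb x

end aux


set_option maxHeartbeats 1000000 in
/-- The second-order remainder of the Taylor expansion of the Tsallis divergence
`T(f,g) = 1/(1−α) + (1/(α−1)) ∫ f^α g^{1−α}` around `(f₀, g₀)` is
`O(‖f−f₀‖₂² + ‖g−g₀‖₂²)`: there is a constant `C` depending only on `α, B, B'`
such that for all densities `f, g, f₀, g₀` bounded in `[B', B]`,
`|T(f,g) − T(f₀,g₀) − (α/(α−1))∫ f₀^{α−1} g₀^{1−α}(f−f₀) + ∫ f₀^α g₀^{−α}(g−g₀)|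
  ≤ C (‖f−f₀‖₂² + ‖g−g₀‖₂²)`. -/
theorem tsallis_second_order_remainder
    {X : Type*} [MeasurableSpace X] (μ : Measure X) [IsFiniteMeasure μ]
    (α B B' : ℝ) (hα0 : α ≠ 0) (hα1 : α ≠ 1) (hB' : 0 < B') (hBB : B' ≤ B) :
    ∃ C : ℝ, 0 < C ∧
      ∀ f g f₀ g₀ : X → ℝ,
        Measurable f → Measurable g → Measurable f₀ → Measurable g₀ →
        (∀ x, B' ≤ f x ∧ f x ≤ B) → (∀ x, B' ≤ g x ∧ g x ≤ B) →
        (∀ x, B' ≤ f₀ x ∧ f₀ x ≤ B) → (∀ x, B' ≤ g₀ x ∧ g₀ x ≤ B) →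
        (∫ x, f x ∂μ = 1) → (∫ x, g x ∂μ = 1) →
        (∫ x, f₀ x ∂μ = 1) → (∫ x, g₀ x ∂μ = 1) →
        |(1 / (1 - α) + (1 / (α - 1)) * ∫ x, f x ^ α * g x ^ (1 - α) ∂μ)
          - (1 / (1 - α) + (1 / (α - 1)) * ∫ x, f₀ x ^ α * g₀ x ^ (1 - α) ∂μ)
          - (α / (α - 1)) * ∫ x, f₀ x ^ (α - 1) * g₀ x ^ (1 - α) * (f x - f₀ x) ∂μ
          + ∫ x, f₀ x ^ α * g₀ x ^ (-α) * (g x - g₀ x) ∂μ|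
        ≤ C * ((∫ x, (f x - f₀ x)^2 ∂μ) + (∫ x, (g x - g₀ x)^2 ∂μ)) := by
  have ha1 : α - 1 ≠ 0 := sub_ne_zero.2 hα1
  have hKfnn : 0 ≤ Kf B B' α := by unfold Kf Ktc Lc Mc; positivity
  refine ⟨|1 / (α - 1)| * Kf B B' α + 1, by positivity, ?_⟩
  intro f g f₀ g₀ hfm hgm hf₀m hg₀m hf hg hf₀ hg₀ _ _ _ _
  have hfI : ∀ x, f x ∈ Set.Icc B' B := fun x => ⟨(hf x).1, (hf x).2⟩
  have hgI : ∀ x, g x ∈ Set.Icc B' B := fun x => ⟨(hg x).1, (hg x).2⟩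
  have hf₀I : ∀ x, f₀ x ∈ Set.Icc B' B := fun x => ⟨(hf₀ x).1, (hf₀ x).2⟩
  have hg₀I : ∀ x, g₀ x ∈ Set.Icc B' B := fun x => ⟨(hg₀ x).1, (hg₀ x).2⟩
  -- integrands
  set A : X → ℝ := fun x => f x ^ α * g x ^ (1 - α) with hAd
  set A₀ : X → ℝ := fun x => f₀ x ^ α * g₀ x ^ (1 - α) with hA₀d
  set T1 : X → ℝ := fun x => f₀ x ^ (α - 1) * g₀ x ^ (1 - α) * (f x - f₀ x) with hT1d
  set T2 : X → ℝ := fun x => f₀ x ^ α * g₀ x ^ (-α) * (g x - g₀ x) with hT2d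
  -- abs bounds for rpow of bounded functions
  have habs_rpow : ∀ (h : X → ℝ), (∀ x, h x ∈ Set.Icc B' B) → ∀ (q : ℝ) (x : X),
      |h x ^ q| ≤ Mc B B' q := by
    intro h hh q x
    rw [abs_of_pos (Real.rpow_pos_of_pos (hB'.trans_le (hh x).1) q)]
    exact rpow_le_max hB' q (hh x)
  have hdiff : ∀ (h h' : X → ℝ), (∀ x, h x ∈ Set.Icc B' B) →
      (∀ x, h' x ∈ Set.Icc B' B) → ∀ x, |h x - h' x| ≤ B - B' := by
    intro h h' hh hh' x
    rw [abs_le]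
    exact ⟨by linarith [(hh x).1, (hh' x).2], by linarith [(hh x).2, (hh' x).1]⟩
  -- integrability
  have hAi : Integrable A μ := by
    refine integrable_of_abs_bound ((meas_rpow hfm α).mul (meas_rpow hgm (1-α)))
      (M := Mc B B' α * Mc B B' (1 - α)) (fun x => ?_)
    rw [abs_mul]
    exact mul_le_mul (habs_rpow f hfI α x) (habs_rpow g hgI (1-α) x) (abs_nonneg _)
      ((abs_nonneg _).trans (habs_rpow f hfI α x))
  have hA₀i : Integrable A₀ μ := by
    refine integrable_of_abs_bound ((meas_rpow hf₀m α).mul (meas_rpow hg₀m (1-α)))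
      (M := Mc B B' α * Mc B B' (1 - α)) (fun x => ?_)
    rw [abs_mul]
    exact mul_le_mul (habs_rpow f₀ hf₀I α x) (habs_rpow g₀ hg₀I (1-α) x) (abs_nonneg _)
      ((abs_nonneg _).trans (habs_rpow f₀ hf₀I α x))
  have hT1i : Integrable T1 μ := by
    refine integrable_of_abs_bound
      (((meas_rpow hf₀m (α-1)).mul (meas_rpow hg₀m (1-α))).mul (hfm.sub hf₀m))
      (M := Mc B B' (α-1) * Mc B B' (1 - α) * (B - B')) (fun x => ?_)
    rw [abs_mul, abs_mul]
    refine mul_le_mul (mul_le_mul (habs_rpow f₀ hf₀I (α-1) x)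
      (habs_rpow g₀ hg₀I (1-α) x) (abs_nonneg _)
      ((abs_nonneg _).trans (habs_rpow f₀ hf₀I (α-1) x)))
      (hdiff f f₀ hfI hf₀I x) (abs_nonneg _) ?_
    have h1 := (abs_nonneg _).trans (habs_rpow f₀ hf₀I (α-1) x)
    have h2 := (abs_nonneg _).trans (habs_rpow g₀ hg₀I (1-α) x)
    positivity
  have hT2i : Integrable T2 μ := by
    refine integrable_of_abs_bound
      (((meas_rpow hf₀m α).mul (meas_rpow hg₀m (-α))).mul (hgm.sub hg₀m))
      (M := Mc B B' α * Mc B B' (-α) * (B - B')) (fun x => ?_)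
    rw [abs_mul, abs_mul]
    refine mul_le_mul (mul_le_mul (habs_rpow f₀ hf₀I α x)
      (habs_rpow g₀ hg₀I (-α) x) (abs_nonneg _)
      ((abs_nonneg _).trans (habs_rpow f₀ hf₀I α x)))
      (hdiff g g₀ hgI hg₀I x) (abs_nonneg _) ?_
    have h1 := (abs_nonneg _).trans (habs_rpow f₀ hf₀I α x)
    have h2 := (abs_nonneg _).trans (habs_rpow g₀ hg₀I (-α) x)
    positivity
  have hsqf : Integrable (fun x => (f x - f₀ x)^2) μ := by
    refine integrable_of_abs_bound ((hfm.sub hf₀m).pow_const 2)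
      (M := (B - B')^2) (fun x => ?_)
    rw [abs_of_nonneg (sq_nonneg _), ← sq_abs]
    exact pow_le_pow_left₀ (abs_nonneg _) (hdiff f f₀ hfI hf₀I x) 2
  have hsqg : Integrable (fun x => (g x - g₀ x)^2) μ := by
    refine integrable_of_abs_bound ((hgm.sub hg₀m).pow_const 2)
      (M := (B - B')^2) (fun x => ?_)
    rw [abs_of_nonneg (sq_nonneg _), ← sq_abs]
    exact pow_le_pow_left₀ (abs_nonneg _) (hdiff g g₀ hgI hg₀I x) 2
  -- the remainder integrand
  have i1 : Integrable (fun x => A x - A₀ x) μ := hAi.sub hA₀i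
  have i2 : Integrable (fun x => A x - A₀ x - α * T1 x) μ := i1.sub (hT1i.const_mul α)
  have i3 : Integrable (fun x => α * T1 x) μ := hT1i.const_mul α
  have i4 : Integrable (fun x => (1 - α) * T2 x) μ := hT2i.const_mul (1 - α)
  have h12 := integral_sub hAi hA₀i
  have h123 := integral_sub i1 i3
  have h1234 := integral_sub i2 i4
  have hRint : ∫ x, (A x - A₀ x - α * T1 x - (1 - α) * T2 x) ∂μ
      = (∫ x, A x ∂μ) - (∫ x, A₀ x ∂μ)
      - α * (∫ x, T1 x ∂μ) - (1 - α) * (∫ x, T2 x ∂μ) := by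
    rw [h1234, h123, h12, integral_const_mul, integral_const_mul]
  -- pointwise bound on R
  have hRb : ∀ x, |A x - A₀ x - α * T1 x - (1 - α) * T2 x|
      ≤ Kf B B' α * ((f x - f₀ x)^2 + (g x - g₀ x)^2) := by
    intro x
    have := pointwise_bound hB' hBB α (hfI x) (hgI x) (hf₀I x) (hg₀I x)
    simp only [hAd, hA₀d, hT1d, hT2d]
    convert this using 2
  -- bound on |∫ R|
  have hbint : Integrable (fun x => Kf B B' α * ((f x - f₀ x)^2 + (g x - g₀ x)^2)) μ :=
    (hsqf.add hsqg).const_mul _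
  have hIR : |∫ x, (A x - A₀ x - α * T1 x - (1 - α) * T2 x) ∂μ|
      ≤ Kf B B' α * ((∫ x, (f x - f₀ x)^2 ∂μ) + (∫ x, (g x - g₀ x)^2 ∂μ)) := by
    have h1 : |∫ x, (A x - A₀ x - α * T1 x - (1 - α) * T2 x) ∂μ|
        ≤ ∫ x, Kf B B' α * ((f x - f₀ x)^2 + (g x - g₀ x)^2) ∂μ := by
      rw [← Real.norm_eq_abs]
      refine norm_integral_le_of_norm_le hbint ?_
      filter_upwards with x
      simpa [Real.norm_eq_abs] using hRb x
    rwa [integral_const_mul, integral_add hsqf hsqg] at h1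
  -- rewrite the LHS
  have hS : 0 ≤ (∫ x, (f x - f₀ x)^2 ∂μ) + (∫ x, (g x - g₀ x)^2 ∂μ) := by
    have := integral_nonneg (μ := μ) (f := fun x => (f x - f₀ x)^2) (fun x => sq_nonneg _)
    have := integral_nonneg (μ := μ) (f := fun x => (g x - g₀ x)^2) (fun x => sq_nonneg _)
    linarith
  have hLHS : (1 / (1 - α) + (1 / (α - 1)) * ∫ x, A x ∂μ)
      - (1 / (1 - α) + (1 / (α - 1)) * ∫ x, A₀ x ∂μ)
      - (α / (α - 1)) * (∫ x, T1 x ∂μ) + (∫ x, T2 x ∂μ)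
      = (1 / (α - 1)) * ∫ x, (A x - A₀ x - α * T1 x - (1 - α) * T2 x) ∂μ := by
    rw [hRint]
    field_simp
    ring
  rw [hLHS, abs_mul]
  calc |1 / (α - 1)| * |∫ x, (A x - A₀ x - α * T1 x - (1 - α) * T2 x) ∂μ|
      ≤ |1 / (α - 1)| * (Kf B B' α *
          ((∫ x, (f x - f₀ x)^2 ∂μ) + (∫ x, (g x - g₀ x)^2 ∂μ))) :=
        mul_le_mul_of_nonneg_left hIR (abs_nonneg _)
    _ = (|1 / (α - 1)| * Kf B B' α) *
          ((∫ x, (f x - f₀ x)^2 ∂μ) + (∫ x, (g x - g₀ x)^2 ∂μ)) := by ring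
    _ ≤ (|1 / (α - 1)| * Kf B B' α + 1) *
          ((∫ x, (f x - f₀ x)^2 ∂μ) + (∫ x, (g x - g₀ x)^2 ∂μ)) := by
        refine mul_le_mul_of_nonneg_right ?_ hS
        linarith
end

section
/- For kernel density estimates f̂₋ᵢ and f̂'₋ᵢ built from samples differing only in the point X₁ (replaced by X'₁), the L1 distance satisfies ∫|f̂₋ᵢ − f̂'₋ᵢ| ≤ ‖K‖_∞ / n, and consequently for Lipschitz φ, ν: |φ(∫ν(f̂₋ᵢ)) − φ(∫ν(f̂'₋ᵢ))| ≤ L_φ L_ν ‖K‖_∞ / n. -/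
open MeasureTheory Module
open scoped NNReal

/-!
Only the kernel term centred at the changed point differs between the two estimates, so
`f̂ - f̂'` is `(n hᵈ)⁻¹` times the difference of two rescaled translates of `K`. The change of
variables `u = h⁻¹ (t - a)` gives each translate `L¹` norm `hᵈ ∫ |K|`, hence
`∫ |f̂ - f̂'| ≤ 2 ∫ |K| / n ≤ ‖K‖_∞ / n`. The Lipschitz bound follows by pushing
`|ν a - ν b| ≤ L_ν |a - b|` under the integral and then applying `φ`.
-/

theorem Fintype.sum_sub_sum_eq_of_eq_of_ne {ι G : Type*} [Fintype ι] [AddCommGroup G]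
    (F F' : ι → G) (i₀ : ι) (hF : ∀ j, j ≠ i₀ → F j = F' j) :
    ∑ j, F j - ∑ j, F' j = F i₀ - F' i₀ := by
  rw [← Finset.sum_sub_distrib]
  exact Fintype.sum_eq_single i₀ fun j hj => by rw [hF j hj, sub_self]

theorem LipschitzWith.abs_integral_comp_sub_integral_comp_le {α : Type*} [MeasurableSpace α]
    {μ : Measure α} {ν : ℝ → ℝ} {L : ℝ≥0} (hν : LipschitzWith L ν) {f g : α → ℝ}
    (hf : Integrable (fun x => ν (f x)) μ) (hg : Integrable (fun x => ν (g x)) μ)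
    (hfg : Integrable (fun x => f x - g x) μ) :
    |∫ x, ν (f x) ∂μ - ∫ x, ν (g x) ∂μ| ≤ L * ∫ x, |f x - g x| ∂μ := by
  rw [← integral_sub hf hg, ← integral_const_mul]
  calc |∫ x, ν (f x) - ν (g x) ∂μ| ≤ ∫ x, |ν (f x) - ν (g x)| ∂μ :=
        abs_integral_le_integral_abs
    _ ≤ ∫ x, L * |f x - g x| ∂μ := by
        refine integral_mono (hf.sub hg).abs (hfg.abs.const_mul _) fun x => ?_
        simpa only [Real.dist_eq] using hν.dist_le_mul (f x) (g x)

section KernelDensityEstimate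

variable {E ι : Type*} [NormedAddCommGroup E] [NormedSpace ℝ E] [Fintype ι]

/-- Normalised by `n`, which need not be the number of points `Fintype.card ι`. -/
noncomputable def kde (n : ℕ) (K : E → ℝ) (h : ℝ) (y : ι → E) (t : E) : ℝ :=
  (n * h ^ finrank ℝ E)⁻¹ * ∑ j, K (h⁻¹ • (t - y j))

theorem kde_sub_kde_of_eq_of_ne (n : ℕ) (K : E → ℝ) (h : ℝ) {y y' : ι → E} {i₀ : ι}
    (hyy : ∀ j, j ≠ i₀ → y j = y' j) (t : E) :
    kde n K h y t - kde n K h y' t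
      = (n * h ^ finrank ℝ E)⁻¹ * (K (h⁻¹ • (t - y i₀)) - K (h⁻¹ • (t - y' i₀))) := by
  rw [kde, kde, ← mul_sub, Fintype.sum_sub_sum_eq_of_eq_of_ne _ _ i₀ fun j hj => by rw [hyy j hj]]

variable [MeasurableSpace E] [BorelSpace E] [FiniteDimensional ℝ E] (μ : Measure E)
  [μ.IsAddHaarMeasure]

theorem integral_abs_comp_inv_smul_sub (K : E → ℝ) (h : ℝ) (a : E) :
    ∫ t, |K (h⁻¹ • (t - a))| ∂μ = |h ^ finrank ℝ E| * ∫ z, |K z| ∂μ := by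
  rw [integral_sub_right_eq_self (fun t => |K (h⁻¹ • t)|) a,
    Measure.integral_comp_inv_smul μ (fun z => |K z|) h, smul_eq_mul]

theorem MeasureTheory.Integrable.comp_inv_smul_sub {K : E → ℝ} (hK : Integrable K μ) {h : ℝ}
    (hh : h ≠ 0) (a : E) : Integrable (fun t => K (h⁻¹ • (t - a))) μ :=
  (hK.comp_smul (inv_ne_zero hh)).comp_sub_right a

theorem integral_abs_comp_inv_smul_sub_sub_le {K : E → ℝ} (hK : Integrable K μ) {h : ℝ}
    (hh : h ≠ 0) (a b : E) :
    ∫ t, |K (h⁻¹ • (t - a)) - K (h⁻¹ • (t - b))| ∂μ ≤ 2 * |h ^ finrank ℝ E| * ∫ z, |K z| ∂μ := by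
  have ha := (hK.comp_inv_smul_sub μ hh a).abs
  have hb := (hK.comp_inv_smul_sub μ hh b).abs
  calc ∫ t, |K (h⁻¹ • (t - a)) - K (h⁻¹ • (t - b))| ∂μ
      ≤ ∫ t, |K (h⁻¹ • (t - a))| + |K (h⁻¹ • (t - b))| ∂μ :=
        integral_mono_of_nonneg (.of_forall fun _ => abs_nonneg _) (ha.add hb)
          (.of_forall fun _ => abs_sub _ _)
    _ = 2 * |h ^ finrank ℝ E| * ∫ z, |K z| ∂μ := by
        rw [integral_add ha hb, integral_abs_comp_inv_smul_sub, integral_abs_comp_inv_smul_sub]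
        ring

variable {μ}

theorem integrable_kde_sub_kde (n : ℕ) {K : E → ℝ} (hK : Integrable K μ) {h : ℝ} (hh : h ≠ 0)
    {y y' : ι → E} {i₀ : ι} (hyy : ∀ j, j ≠ i₀ → y j = y' j) :
    Integrable (fun t => kde n K h y t - kde n K h y' t) μ := by
  simp only [kde_sub_kde_of_eq_of_ne n K h hyy]
  exact ((hK.comp_inv_smul_sub μ hh _).sub (hK.comp_inv_smul_sub μ hh _)).const_mul _

theorem integral_abs_kde_sub_kde_le (n : ℕ) {K : E → ℝ} (hK : Integrable K μ) {h : ℝ}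
    (hh : h ≠ 0) {y y' : ι → E} {i₀ : ι} (hyy : ∀ j, j ≠ i₀ → y j = y' j) :
    ∫ t, |kde n K h y t - kde n K h y' t| ∂μ ≤ 2 * (∫ z, |K z| ∂μ) / n := by
  have hhr : h ^ finrank ℝ E ≠ 0 := pow_ne_zero _ hh
  simp only [kde_sub_kde_of_eq_of_ne n K h hyy, abs_mul, integral_const_mul]
  calc |(n * h ^ finrank ℝ E)⁻¹| * ∫ t, |K (h⁻¹ • (t - y i₀)) - K (h⁻¹ • (t - y' i₀))| ∂μ
      ≤ |(n * h ^ finrank ℝ E)⁻¹| * (2 * |h ^ finrank ℝ E| * ∫ z, |K z| ∂μ) := by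
        gcongr
        exact integral_abs_comp_inv_smul_sub_sub_le μ hK hh _ _
    _ = 2 * (∫ z, |K z| ∂μ) / n := by
        rw [abs_inv, abs_mul, Nat.abs_cast]
        field_simp [abs_ne_zero.2 hhr]

end KernelDensityEstimate

theorem kde_one_point_L1_difference_general
    {d : ℕ} (n m : ℕ)
    (K : (Fin d → ℝ) → ℝ) (Kinf h : ℝ) (hh : 0 < h)
    (hKint : Integrable K (volume : Measure (Fin d → ℝ)))
    (hKnorm : 2 * ∫ z, |K z| ∂(volume : Measure (Fin d → ℝ)) ≤ Kinf)
    (y y' : Fin m → (Fin d → ℝ)) (i0 : Fin m)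
    (hyy : ∀ j, j ≠ i0 → y j = y' j)
    (φ ν : ℝ → ℝ) (Lφ Lν : ℝ≥0)
    (hφ : LipschitzWith Lφ φ) (hν : LipschitzWith Lν ν)
    (fhat fhat' : (Fin d → ℝ) → ℝ)
    (hfhat : fhat = fun t => (1 / (n * h ^ d)) * ∑ j, K (h⁻¹ • (t - y j)))
    (hfhat' : fhat' = fun t => (1 / (n * h ^ d)) * ∑ j, K (h⁻¹ • (t - y' j)))
    (hint : Integrable (fun t => ν (fhat t)) (volume : Measure (Fin d → ℝ)))
    (hint' : Integrable (fun t => ν (fhat' t)) (volume : Measure (Fin d → ℝ))) :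
    (∫ t, |fhat t - fhat' t| ∂(volume : Measure (Fin d → ℝ))) ≤ Kinf / n ∧
    |φ (∫ t, ν (fhat t) ∂(volume : Measure (Fin d → ℝ)))
      - φ (∫ t, ν (fhat' t) ∂(volume : Measure (Fin d → ℝ)))|
      ≤ (Lφ : ℝ) * (Lν : ℝ) * Kinf / n := by
  have hkde : ∀ z : Fin m → Fin d → ℝ,
      (fun t => (1 / (n * h ^ d)) * ∑ j, K (h⁻¹ • (t - z j))) = kde n K h z := by
    intro z
    ext t
    rw [kde, finrank_fin_fun, one_div]
  rw [hkde] at hfhat hfhat'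
  subst hfhat hfhat'
  have hL1 : ∫ t, |kde n K h y t - kde n K h y' t| ≤ Kinf / n :=
    (integral_abs_kde_sub_kde_le n hKint hh.ne' hyy).trans (by gcongr)
  refine ⟨hL1, ?_⟩
  calc |φ (∫ t, ν (kde n K h y t)) - φ (∫ t, ν (kde n K h y' t))|
      ≤ Lφ * |(∫ t, ν (kde n K h y t)) - ∫ t, ν (kde n K h y' t)| := by
        simpa only [Real.dist_eq] using hφ.dist_le_mul _ _
    _ ≤ Lφ * (Lν * ∫ t, |kde n K h y t - kde n K h y' t|) := by
        gcongr
        exact hν.abs_integral_comp_sub_integral_comp_le hint hint'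
          (integrable_kde_sub_kde n hKint hh.ne' hyy)
    _ ≤ Lφ * (Lν * (Kinf / n)) := by gcongr
    _ = Lφ * Lν * Kinf / n := by ring

/-- For kernel density estimates built from samples differing only in one point
(`y` vs `y'`, differing only at index `i0`), the L1 distance satisfies
`∫ |f̂ − f̂'| ≤ ‖K‖_∞ / n` (with the normalization `2∫|K| ≤ ‖K‖_∞`), and
consequently for Lipschitz `φ, ν`:
`|φ(∫ ν(f̂)) − φ(∫ ν(f̂'))| ≤ L_φ L_ν ‖K‖_∞ / n`. -/
theorem kde_one_point_L1_difference
    {d : ℕ} (n m : ℕ) (hn : 0 < n)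
    (K : (Fin d → ℝ) → ℝ) (Kinf h : ℝ) (hh : 0 < h) (hKinf : 0 ≤ Kinf)
    (hK : ∀ z, |K z| ≤ Kinf)
    (hKint : Integrable K (volume : Measure (Fin d → ℝ)))
    (hKnorm : 2 * ∫ z, |K z| ∂(volume : Measure (Fin d → ℝ)) ≤ Kinf)
    (y y' : Fin m → (Fin d → ℝ)) (i0 : Fin m)
    (hyy : ∀ j, j ≠ i0 → y j = y' j)
    (φ ν : ℝ → ℝ) (Lφ Lν : ℝ≥0)
    (hφ : LipschitzWith Lφ φ) (hν : LipschitzWith Lν ν)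
    (fhat fhat' : (Fin d → ℝ) → ℝ)
    (hfhat : fhat = fun t => (1 / (n * h ^ d)) * ∑ j, K (h⁻¹ • (t - y j)))
    (hfhat' : fhat' = fun t => (1 / (n * h ^ d)) * ∑ j, K (h⁻¹ • (t - y' j)))
    (hint : Integrable (fun t => ν (fhat t)) (volume : Measure (Fin d → ℝ)))
    (hint' : Integrable (fun t => ν (fhat' t)) (volume : Measure (Fin d → ℝ))) :
    (∫ t, |fhat t - fhat' t| ∂(volume : Measure (Fin d → ℝ))) ≤ Kinf / n ∧
    |φ (∫ t, ν (fhat t) ∂(volume : Measure (Fin d → ℝ)))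
      - φ (∫ t, ν (fhat' t) ∂(volume : Measure (Fin d → ℝ)))|
      ≤ (Lφ : ℝ) * (Lν : ℝ) * Kinf / n :=
  kde_one_point_L1_difference_general n m K Kinf h hh hKint hKnorm y y' i0 hyy φ ν Lφ Lν hφ hν fhat
    fhat' hfhat hfhat' hint hint'
end
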